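/- If ω ∈ S̃_n avoids the pattern 231 and the maximum of ω over the base window {1, …, n} equals n (i.e., max{ω(1),…,ω(n)} = n), then {ω(1), …, ω(n)} = {1, …, n}, so ω restricts to a permutation of {1,…,n}. -/

import Mathlib

/-!
The window values are `n` distinct integers, all at most `n`, with sum `1 + ⋯ + n`. Compare them
with `{1, …, n}`: the values outside `{1, …, n}` are `≤ 0`, the elements of `{1, …, n}` that are
missed are positive, and the two sums must agree; hence nothing is missed.
-/

open Finset

theorem Int.sum_Icc_one_id (n : ℕ) : ∑ i ∈ Icc (1 : ℤ) n, i = ((n + 1).choose 2 : ℤ) := by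
  induction n with
  | zero => simp
  | succ m ih =>
    rw [Nat.cast_succ, ← insert_Icc_right_eq_Icc_add_one (by omega), sum_insert (by simp), ih,
      Nat.choose_succ_succ' (m + 1), Nat.choose_one_right]
    push_cast
    ring

theorem Finset.eq_Icc_one_of_card_eq_of_sum_eq {S : Finset ℤ} {n : ℤ} (hle : ∀ x ∈ S, x ≤ n)
    (hcard : #S = #(Icc 1 n)) (hsum : ∑ x ∈ S, x = ∑ x ∈ Icc 1 n, x) : S = Icc 1 n := by
  suffices hsub : Icc 1 n ⊆ S from (eq_of_subset_of_card_le hsub hcard.le).symm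
  by_contra hnot
  obtain ⟨a, haI, haS⟩ := not_subset.mp hnot
  have hpos : 0 < ∑ x ∈ Icc 1 n \ S, x :=
    sum_pos (fun x hx => (mem_Icc.mp (mem_sdiff.mp hx).1).1) ⟨a, mem_sdiff.mpr ⟨haI, haS⟩⟩
  have hnonpos : ∑ x ∈ S \ Icc 1 n, x ≤ 0 := by
    refine sum_nonpos fun x hx => ?_
    obtain ⟨hxS, hxI⟩ := mem_sdiff.mp hx
    have := hle x hxS
    rw [mem_Icc] at hxI
    omega
  have hdiff := sum_sdiff_sub_sum_sdiff (s₁ := S) (s₂ := Icc 1 n) (f := id)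
  simp only [id, hsum, sub_self] at hdiff
  linarith

theorem avoids_231_max_n_window_general (n : ℕ) (ω : ℤ → ℤ)
    (hbij : Function.Bijective ω)
    (hsum : ∑ i ∈ Finset.Icc (1 : ℤ) (n : ℤ), ω i = ((n + 1).choose 2 : ℤ))
    (hle : ∀ i ∈ Finset.Icc (1 : ℤ) (n : ℤ), ω i ≤ (n : ℤ)) :
    ω '' (Set.Icc (1 : ℤ) (n : ℤ)) = Set.Icc (1 : ℤ) (n : ℤ) := by
  have hinj := hbij.injective
  have hwindow : (Icc (1 : ℤ) n).image ω = Icc (1 : ℤ) n := by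
    refine eq_Icc_one_of_card_eq_of_sum_eq ?_ (card_image_of_injective _ hinj) ?_
    · exact forall_mem_image.mpr hle
    · rw [sum_image fun _ _ _ _ h => hinj h, hsum, Int.sum_Icc_one_id]
  rw [← coe_Icc, ← coe_image, hwindow]

theorem avoids_231_max_n_window (n : ℕ) (hn : 2 ≤ n) (ω : ℤ → ℤ)
    (hbij : Function.Bijective ω)
    (hshift : ∀ i : ℤ, ω (i + n) = ω i + n)
    (hsum : ∑ i ∈ Finset.Icc (1 : ℤ) (n : ℤ), ω i = ((n + 1).choose 2 : ℤ))
    (havoid : ¬ ∃ i₁ i₂ i₃ : ℤ, i₁ < i₂ ∧ i₂ < i₃ ∧ ω i₃ < ω i₁ ∧ ω i₁ < ω i₂)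
    (hle : ∀ i ∈ Finset.Icc (1 : ℤ) (n : ℤ), ω i ≤ (n : ℤ))
    (heq : ∃ i ∈ Finset.Icc (1 : ℤ) (n : ℤ), ω i = (n : ℤ)) :
    ω '' (Set.Icc (1 : ℤ) (n : ℤ)) = Set.Icc (1 : ℤ) (n : ℤ) :=
  avoids_231_max_n_window_general n ω hbij hsum hle
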